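/- arXiv:2404.09810 — 5 statements merged into one kernel-verified Lean document; each statement's English description precedes it below -/
import Mathlib

section
/- For the inverse Gaussian negative log-likelihood F(θ) = −(θy + (−2θ)^{1/2}) − 1/(2y) − (1/2)ln(2πy³) on θ < 0, with fixed y > 0, one has F'(θ) = −(y − (−2θ)^{−1/2}) and F''(θ) = (−2θ)^{−3/2}, and the ratio |F''(θ)|/(F'(θ))² tends to +∞ as θ → 0⁻, while |F'(θ)| and |F''(θ)| also tend to +∞ as θ → 0⁻. -/
/-!
Put `s = (−2θ)^{−1/2}`, which tends to `+∞` as `θ → 0⁻`. Then `F' = s − y` and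
`F'' = s³`, so `|F'|` and `|F''|` blow up, and `|F''| / F'² = s³ / (s − y)²` grows like `s`.
-/

open Real Filter Set Topology Polynomial

theorem tendsto_const_mul_nhdsLT_zero_nhdsGT_zero {a : ℝ} (ha : a < 0) :
    Tendsto (fun x : ℝ => a * x) (𝓝[<] 0) (𝓝[>] 0) := by
  refine tendsto_nhdsWithin_of_tendsto_nhds_of_eventually_within _ ?_ ?_
  · simpa using ((continuous_const_mul a).tendsto 0).mono_left nhdsWithin_le_nhds
  · filter_upwards [self_mem_nhdsWithin] with x (hx : x < 0)
    exact mul_pos_of_neg_of_neg ha hx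

theorem tendsto_const_mul_rpow_nhdsLT_zero_atTop {a p : ℝ} (ha : a < 0) (hp : p < 0) :
    Tendsto (fun x : ℝ => (a * x) ^ p) (𝓝[<] 0) atTop :=
  (tendsto_rpow_neg_nhdsGT_zero hp).comp (tendsto_const_mul_nhdsLT_zero_nhdsGT_zero ha)

theorem hasDerivAt_const_mul_rpow {a x : ℝ} (p : ℝ) (hax : a * x ≠ 0) :
    HasDerivAt (fun x : ℝ => (a * x) ^ p) (a * p * (a * x) ^ (p - 1)) x := by
  simpa using ((hasDerivAt_id' x).const_mul a).rpow_const (p := p) (Or.inl hax)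

theorem rpow_neg_three_div_two_eq_pow {u : ℝ} (hu : 0 ≤ u) :
    u ^ (-(3:ℝ)/2) = (u ^ (-(1:ℝ)/2)) ^ 3 := by
  rw [← rpow_natCast, ← rpow_mul hu]
  norm_num

theorem tendsto_pow_three_div_sub_sq_atTop (y : ℝ) :
    Tendsto (fun t : ℝ => t ^ 3 / (t - y) ^ 2) atTop atTop := by
  have hdeg : ((X - C y) ^ 2).degree < (X ^ 3 : ℝ[X]).degree := by
    rw [degree_pow, degree_X_sub_C, degree_X_pow]
    norm_num
  have hmonic : ((X - C y) ^ 2).Monic := (monic_X_sub_C y).pow 2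
  simpa using div_tendsto_atTop_of_degree_gt _ _ hdeg hmonic.ne_zero
    (by simp [hmonic.leadingCoeff])

theorem inverse_gaussian_superquadratic_general (y : ℝ) :
    (∀ θ : ℝ, θ < 0 →
      HasDerivAt (fun θ : ℝ =>
          -(θ * y + (-2 * θ) ^ ((1:ℝ)/2)) - 1/(2*y) - (1/2) * Real.log (2 * Real.pi * y^3))
        (-(y - (-2 * θ) ^ (-(1:ℝ)/2))) θ ∧
      HasDerivAt (fun θ : ℝ => -(y - (-2 * θ) ^ (-(1:ℝ)/2)))
        ((-2 * θ) ^ (-(3:ℝ)/2)) θ) ∧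
    Tendsto (fun θ : ℝ => |(-2 * θ) ^ (-(3:ℝ)/2)| / (-(y - (-2 * θ) ^ (-(1:ℝ)/2)))^2)
      (nhdsWithin 0 (Set.Iio 0)) atTop ∧
    Tendsto (fun θ : ℝ => |(-(y - (-2 * θ) ^ (-(1:ℝ)/2)))|)
      (nhdsWithin 0 (Set.Iio 0)) atTop ∧
    Tendsto (fun θ : ℝ => |(-2 * θ) ^ (-(3:ℝ)/2)|)
      (nhdsWithin 0 (Set.Iio 0)) atTop := by
  have hs : Tendsto (fun θ : ℝ => (-2 * θ) ^ (-(1:ℝ)/2)) (𝓝[<] 0) atTop :=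
    tendsto_const_mul_rpow_nhdsLT_zero_atTop (by norm_num) (by norm_num)
  have hF'' : (fun θ : ℝ => ((-2 * θ) ^ (-(1:ℝ)/2)) ^ 3) =ᶠ[𝓝[<] 0]
      fun θ => |(-2 * θ) ^ (-(3:ℝ)/2)| := by
    filter_upwards [self_mem_nhdsWithin] with θ (hθ : θ < 0)
    rw [abs_of_nonneg (rpow_nonneg (by linarith) _), rpow_neg_three_div_two_eq_pow (by linarith)]
  refine ⟨fun θ hθ => ?_, ?_, ?_, ?_⟩
  · have hθ' : -2 * θ ≠ 0 := by linarith
    constructor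
    · refine ((((hasDerivAt_mul_const y).add (hasDerivAt_const_mul_rpow (1/2) hθ')).neg.sub_const
        (1/(2*y))).sub_const ((1/2) * Real.log (2 * Real.pi * y^3))).congr_deriv ?_
      rw [show (1:ℝ)/2 - 1 = -(1:ℝ)/2 by norm_num]
      ring
    · refine ((hasDerivAt_const_mul_rpow (-(1:ℝ)/2) hθ').const_sub y).neg.congr_deriv ?_
      rw [show -(1:ℝ)/2 - 1 = -(3:ℝ)/2 by norm_num]
      ring
  · refine ((tendsto_pow_three_div_sub_sq_atTop y).comp hs).congr' ?_
    filter_upwards [hF''] with θ hθ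
    simp only [Function.comp_apply, hθ, neg_sub]
  · refine (tendsto_abs_atTop_atTop.comp (tendsto_atTop_add_const_right _ (-y) hs)).congr ?_
    intro θ
    rw [Function.comp_apply, neg_sub, sub_eq_add_neg]
  · exact ((tendsto_pow_atTop three_ne_zero).comp hs).congr' hF''

/-- For the inverse Gaussian negative log-likelihood
`F(θ) = −(θy + (−2θ)^{1/2}) − 1/(2y) − (1/2)ln(2πy³)` on `θ < 0`, with `y > 0`:
`F'(θ) = −(y − (−2θ)^{−1/2})`, `F''(θ) = (−2θ)^{−3/2}`, and as `θ → 0⁻` the ratio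
`|F''|/F'²`, `|F'|` and `|F''|` all tend to `+∞`. -/
theorem inverse_gaussian_superquadratic (y : ℝ) (hy : 0 < y) :
    (∀ θ : ℝ, θ < 0 →
      HasDerivAt (fun θ : ℝ =>
          -(θ * y + (-2 * θ) ^ ((1:ℝ)/2)) - 1/(2*y) - (1/2) * Real.log (2 * Real.pi * y^3))
        (-(y - (-2 * θ) ^ (-(1:ℝ)/2))) θ ∧
      HasDerivAt (fun θ : ℝ => -(y - (-2 * θ) ^ (-(1:ℝ)/2)))
        ((-2 * θ) ^ (-(3:ℝ)/2)) θ) ∧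
    Tendsto (fun θ : ℝ => |(-2 * θ) ^ (-(3:ℝ)/2)| / (-(y - (-2 * θ) ^ (-(1:ℝ)/2)))^2)
      (nhdsWithin 0 (Set.Iio 0)) atTop ∧
    Tendsto (fun θ : ℝ => |(-(y - (-2 * θ) ^ (-(1:ℝ)/2)))|)
      (nhdsWithin 0 (Set.Iio 0)) atTop ∧
    Tendsto (fun θ : ℝ => |(-2 * θ) ^ (-(3:ℝ)/2)|)
      (nhdsWithin 0 (Set.Iio 0)) atTop :=
  inverse_gaussian_superquadratic_general y
end

section
/- For F(θ) = log(1 + exp(−w₄w₃w₂w₁)) on ℝ⁴, along the curve w₁ = 0, w₂ = w₃ = w₄ = t, the ratio ‖∇²F(θ)‖_F / ‖∇F(θ)‖₂² is bounded below by 1 for all t; hence F is not subquadratically Lipschitz smooth. -/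
/-
The logistic loss `ℓ(x) = log (1 + exp (-x))` has `ℓ' = σ - 1` and `ℓ'' = σ (1 - σ)`, with `σ` the
sigmoid, so at `x = 0` we get `ℓ'' = ℓ'^2 = 1/4`. On the hyperplane `w₁ = θ 0 = 0` the product
`P = w₄w₃w₂w₁` vanishes, its gradient is `(w₄w₃w₂, 0, 0, 0)`, and `∂²P/∂w₁² = 0` everywhere;
hence `∂²F/∂w₁² = ℓ''(0) (w₄w₃w₂)² = ℓ'(0)² (w₄w₃w₂)² = ‖∇F‖²`, and the Frobenius norm of the
Hessian is at least this single entry.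
-/

open Real

/-- The binary cross-entropy risk of the four-layer linear network with final sigmoid. -/
noncomputable def nnRisk (θ : Fin 4 → ℝ) : ℝ :=
  Real.log (1 + Real.exp (-(θ 3 * θ 2 * θ 1 * θ 0)))

/-- An entry of the gradient of `nnRisk`. -/
noncomputable def nnGrad (θ : Fin 4 → ℝ) (i : Fin 4) : ℝ :=
  fderiv ℝ nnRisk θ (Pi.single i 1)

/-- An entry of the Hessian of `nnRisk`. -/
noncomputable def nnHess (θ : Fin 4 → ℝ) (i j : Fin 4) : ℝ :=
  fderiv ℝ (fun ψ => fderiv ℝ nnRisk ψ (Pi.single j 1)) θ (Pi.single i 1)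

open ContinuousLinearMap

section SecondDerivativeOfComposition

variable {E : Type*} [NormedAddCommGroup E] [NormedSpace ℝ E]

theorem fderiv_comp_apply_of_hasDerivAt {g g' : ℝ → ℝ} {f : E → ℝ} {f' : E →L[ℝ] ℝ} {x : E}
    (hg : ∀ y, HasDerivAt g (g' y) y) (hf : HasFDerivAt f f' x) (v : E) :
    fderiv ℝ (g ∘ f) x v = g' (f x) * f' v := by
  simp [((hg _).comp_hasFDerivAt x hf).fderiv]

theorem fderiv_fderiv_comp_apply {g g' : ℝ → ℝ} {g'' : ℝ} {f : E → ℝ} {f' : E → E →L[ℝ] ℝ}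
    {f'' : E →L[ℝ] ℝ} {x u v : E} (hg : ∀ y, HasDerivAt g (g' y) y)
    (hg' : HasDerivAt g' g'' (f x)) (hf : ∀ y, HasFDerivAt f (f' y) y)
    (hf' : HasFDerivAt (fun y => f' y v) f'' x) :
    fderiv ℝ (fun y => fderiv ℝ (g ∘ f) y v) x u = g'' * f' x u * f' x v + g' (f x) * f'' u := by
  have hfun : (fun y => fderiv ℝ (g ∘ f) y v) = fun y => g' (f y) * f' y v :=
    funext fun y => fderiv_comp_apply_of_hasDerivAt hg (hf y) v
  have hprod : HasFDerivAt (fun y => g' (f y) * f' y v) _ x :=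
    (hg'.comp_hasFDerivAt x (hf x)).mul hf'
  rw [hfun, hprod.fderiv]
  simp only [add_apply, smul_apply, smul_eq_mul, Function.comp_apply]
  ring

end SecondDerivativeOfComposition

theorem hasDerivAt_log_one_add_exp_neg (x : ℝ) :
    HasDerivAt (fun x => log (1 + exp (-x))) (sigmoid x - 1) x := by
  have h := ((hasDerivAt_neg' x).exp.const_add 1).log (by positivity)
  convert h using 1
  rw [sigmoid_def]
  field_simp
  ring

theorem nnRisk_eq_comp :
    nnRisk = (fun x => log (1 + exp (-x))) ∘ fun θ : Fin 4 → ℝ => θ 3 * θ 2 * θ 1 * θ 0 :=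
  rfl

noncomputable def weightProdGrad (θ : Fin 4 → ℝ) : (Fin 4 → ℝ) →L[ℝ] ℝ :=
  (θ 3 * θ 2 * θ 1) • proj 0 + (θ 3 * θ 2 * θ 0) • proj 1 + (θ 3 * θ 1 * θ 0) • proj 2 +
    (θ 2 * θ 1 * θ 0) • proj 3

theorem hasFDerivAt_weightProd (θ : Fin 4 → ℝ) :
    HasFDerivAt (fun θ : Fin 4 → ℝ => θ 3 * θ 2 * θ 1 * θ 0) (weightProdGrad θ) θ := by
  refine (((hasFDerivAt_apply (𝕜 := ℝ) 3 θ).mul (hasFDerivAt_apply 2 θ)).mul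
    (hasFDerivAt_apply 1 θ)).mul (hasFDerivAt_apply 0 θ) |>.congr_fderiv ?_
  ext v
  simp only [weightProdGrad, Pi.mul_apply, smul_add, add_apply, smul_apply, proj_apply, smul_eq_mul]
  ring

theorem weightProdGrad_apply_single_zero (θ : Fin 4 → ℝ) :
    weightProdGrad θ (Pi.single 0 1) = θ 3 * θ 2 * θ 1 := by
  simp [weightProdGrad]

theorem nnGrad_eq (θ : Fin 4 → ℝ) (i : Fin 4) :
    nnGrad θ i = (sigmoid (θ 3 * θ 2 * θ 1 * θ 0) - 1) * weightProdGrad θ (Pi.single i 1) :=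
  fderiv_comp_apply_of_hasDerivAt hasDerivAt_log_one_add_exp_neg (hasFDerivAt_weightProd θ) _

theorem nnHess_zero_zero (θ : Fin 4 → ℝ) :
    nnHess θ 0 0 = sigmoid (θ 3 * θ 2 * θ 1 * θ 0) * (1 - sigmoid (θ 3 * θ 2 * θ 1 * θ 0)) *
      (θ 3 * θ 2 * θ 1) ^ 2 := by
  obtain ⟨L, hpartial, hL⟩ : ∃ L : (Fin 4 → ℝ) →L[ℝ] ℝ,
      HasFDerivAt (fun ψ => weightProdGrad ψ (Pi.single 0 1)) L θ ∧ L (Pi.single 0 1) = 0 :=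
    ⟨_, (((hasFDerivAt_apply (𝕜 := ℝ) 3 θ).mul (hasFDerivAt_apply 2 θ)).mul
      (hasFDerivAt_apply 1 θ)).congr_of_eventuallyEq
        (.of_forall weightProdGrad_apply_single_zero), by simp⟩
  rw [nnHess, nnRisk_eq_comp, fderiv_fderiv_comp_apply hasDerivAt_log_one_add_exp_neg
    ((hasDerivAt_sigmoid _).sub_const 1) hasFDerivAt_weightProd hpartial, hL,
    weightProdGrad_apply_single_zero]
  ring

theorem sum_nnGrad_sq_of_eq_zero {θ : Fin 4 → ℝ} (h0 : θ 0 = 0) :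
    ∑ i, nnGrad θ i ^ 2 = (θ 3 * θ 2 * θ 1) ^ 2 / 4 := by
  simp only [Fin.sum_univ_four, nnGrad_eq, weightProdGrad, h0, mul_zero, sigmoid_zero, add_apply,
    smul_apply, proj_apply, smul_eq_mul, Pi.single_eq_same, ne_eq, zero_ne_one, not_false_eq_true,
    Pi.single_eq_of_ne, Fin.reduceEq]
  ring

theorem nnHess_zero_zero_of_eq_zero {θ : Fin 4 → ℝ} (h0 : θ 0 = 0) :
    nnHess θ 0 0 = (θ 3 * θ 2 * θ 1) ^ 2 / 4 := by
  rw [nnHess_zero_zero, h0, mul_zero, sigmoid_zero]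
  ring

theorem one_le_sqrt_sum_nnHess_sq_div_sum_nnGrad_sq {θ : Fin 4 → ℝ} (h0 : θ 0 = 0)
    (hθ : θ 3 * θ 2 * θ 1 ≠ 0) :
    1 ≤ √(∑ i, ∑ j, nnHess θ i j ^ 2) / ∑ i, nnGrad θ i ^ 2 := by
  have hentry : nnHess θ 0 0 ^ 2 ≤ ∑ i, ∑ j, nnHess θ i j ^ 2 :=
    (Finset.single_le_sum (fun j _ => sq_nonneg (nnHess θ 0 j)) (Finset.mem_univ 0)).trans
      (Finset.single_le_sum (fun i _ => Finset.sum_nonneg fun j _ => sq_nonneg (nnHess θ i j))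
        (Finset.mem_univ 0))
  rw [sum_nnGrad_sq_of_eq_zero h0, one_le_div (by positivity)]
  calc (θ 3 * θ 2 * θ 1) ^ 2 / 4 = √(nnHess θ 0 0 ^ 2) := by
        rw [nnHess_zero_zero_of_eq_zero h0, sqrt_sq (by positivity)]
    _ ≤ √(∑ i, ∑ j, nnHess θ i j ^ 2) := sqrt_le_sqrt hentry

/-- Along the curve `w₁ = 0`, `w₂ = w₃ = w₄ = t`, the ratio of the Frobenius norm of the
Hessian of the network risk to the squared Euclidean norm of its gradient is at least `1`,
while the gradient norm diverges; hence the risk is not subquadratically Lipschitz smooth. -/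
theorem neural_network_not_subquadratically_smooth :
    (∀ t : ℝ, t ≠ 0 →
      1 ≤ Real.sqrt (∑ i : Fin 4, ∑ j : Fin 4,
              (nnHess (fun i => if i = 0 then (0:ℝ) else t) i j)^2)
            / (∑ i : Fin 4, (nnGrad (fun i => if i = 0 then (0:ℝ) else t) i)^2)) ∧
    Filter.Tendsto
      (fun t : ℝ => ∑ i : Fin 4, (nnGrad (fun i => if i = 0 then (0:ℝ) else t) i)^2)
      Filter.atTop Filter.atTop := by
  refine ⟨fun t ht => one_le_sqrt_sum_nnHess_sq_div_sum_nnGrad_sq rfl (by simp [ht]), ?_⟩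
  have hgrad : (fun t : ℝ => ∑ i : Fin 4, (nnGrad (fun i => if i = 0 then (0:ℝ) else t) i)^2) =
      fun t => t ^ 6 / 4 :=
    funext fun t => by rw [sum_nnGrad_sq_of_eq_zero rfl]; simp only [Fin.reduceEq, ↓reduceIte]; ring
  rw [hgrad]
  exact (Filter.tendsto_pow_atTop (by norm_num)).atTop_div_const (by norm_num)
end

section
/- Let m > 0, and let F : ℝ → ℝ be a differentiable function with locally Lipschitz derivative satisfying F(jm) ≥ 7jm/16 and F'(jm) = −2^{−j} for all j ≥ 0. If θ₀ = 0, θ₁ = θ₀ − m F'(θ₀), and for k ≥ 1, θ_{k+1} = θ_k − [(θ_k − θ_{k−1})/(F'(θ_k) − F'(θ_{k−1}))]·F'(θ_k) (the Barzilai–Borwein method), then θ_j = jm for all j ≥ 0 and F(θ_j) → ∞. -/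
open Filter

/-- The Barzilai–Borwein method on the piecewise construction with `S_j = jm`,
`d_j = 2^{−j}`: the iterates satisfy `θ_j = jm`, and `F(θ_j) → ∞`. -/
theorem barzilai_borwein_diverges (m : ℝ) (hm : 0 < m)
    (F : ℝ → ℝ) (hF : Differentiable ℝ F) (hloc : LocallyLipschitz (deriv F))
    (hval : ∀ j : ℕ, F (j * m) ≥ 7 * j * m / 16)
    (hder : ∀ j : ℕ, deriv F (j * m) = -((2:ℝ)^j)⁻¹)
    (θ : ℕ → ℝ) (h0 : θ 0 = 0)
    (h1 : θ 1 = θ 0 - m * deriv F (θ 0))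
    (hrec : ∀ k : ℕ, 1 ≤ k →
      θ (k+1) = θ k - (θ k - θ (k-1)) / (deriv F (θ k) - deriv F (θ (k-1))) * deriv F (θ k)) :
    (∀ j : ℕ, θ j = j * m) ∧ Tendsto (fun j => F (θ j)) atTop atTop := by
  have key : ∀ j : ℕ, θ j = j * m := by
    intro j
    induction j using Nat.twoStepInduction with
    | zero => simpa using h0
    | one =>
      rw [h1, h0]
      have := hder 0
      simp at this
      rw [show (0:ℝ) = (0:ℕ) * m by simp] at *
      rw [hder 0]
      push_cast
      ring
    | more k ih2 ih1 =>
      have hr := hrec (k+1) (by omega)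
      simp only [Nat.add_sub_cancel] at hr
      rw [ih1, ih2, hder (k+1), hder k] at hr
      have h2k : (2:ℝ)^k ≠ 0 := by positivity
      have h2k1 : (2:ℝ)^(k+1) ≠ 0 := by positivity
      have hden : -((2:ℝ)^(k+1))⁻¹ - -((2:ℝ)^k)⁻¹ = ((2:ℝ)^(k+1))⁻¹ := by
        rw [pow_succ]; field_simp; ring
      rw [hden, mul_neg, div_mul_cancel₀ _ (inv_ne_zero h2k1)] at hr
      rw [hr]
      push_cast
      ring
  refine ⟨key, ?_⟩
  have hlow : Tendsto (fun j : ℕ => (j:ℝ) * (7 * m / 16)) atTop atTop :=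
    tendsto_natCast_atTop_atTop.atTop_mul_const (by positivity)
  apply tendsto_atTop_mono _ hlow
  intro j
  rw [key j]
  have := hval j
  nlinarith [hval j]
end

section
/- Let m, m' > 0, and let F : ℝ → ℝ be twice differentiable with F(jm) ≥ 7jm/16, F'(jm) = −1, and F''(jm) = 0 for all j ≥ 0 (F locally linear near each point jm). Then the negative-curvature two-step method θ_{k+1} = θ_k + m s_k + m' s_k' — where s_k' = 0 whenever F''(θ_k) ≥ 0 and s_k = −F'(θ_k) — started from θ₀ = 0 produces θ_j = jm for all j, so F(θ_j) → ∞ while |F'(θ_j)| = 1 for all j. -/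
open Filter

/-- The two-step negative curvature method on the piecewise construction with `S_j = jm`,
`d_j = 1`: since `F` is locally linear (zero second derivative, slope `−1`) at each `jm`,
the iterates are `θ_j = jm`, `F(θ_j) → ∞`, and `|F'(θ_j)| = 1` for all `j`. -/
theorem negative_curvature_method_diverges (m m' : ℝ) (hm : 0 < m) (hm' : 0 < m')
    (F : ℝ → ℝ) (hF : Differentiable ℝ F) (hF' : Differentiable ℝ (deriv F))
    (hval : ∀ j : ℕ, F (j * m) ≥ 7 * j * m / 16)
    (hder : ∀ j : ℕ, deriv F (j * m) = -1)
    (hsec : ∀ j : ℕ, deriv (deriv F) (j * m) = 0)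
    (θ : ℕ → ℝ) (s s' : ℕ → ℝ) (h0 : θ 0 = 0)
    (hs : ∀ k : ℕ, s k = -deriv F (θ k))
    (hs' : ∀ k : ℕ, 0 ≤ deriv (deriv F) (θ k) → s' k = 0)
    (hrec : ∀ k : ℕ, θ (k+1) = θ k + m * s k + m' * s' k) :
    (∀ j : ℕ, θ j = j * m) ∧
    Tendsto (fun j => F (θ j)) atTop atTop ∧
    (∀ j : ℕ, |deriv F (θ j)| = 1) := by
  have hth : ∀ j : ℕ, θ j = j * m := by
    intro j
    induction j with
    | zero => simp [h0]
    | succ k ih =>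
      have hsk : s k = 1 := by rw [hs, ih, hder k]; ring
      have hsk' : s' k = 0 := hs' k (by rw [ih, hsec k])
      rw [hrec, hsk, hsk', ih]
      push_cast
      ring
  refine ⟨hth, ?_, ?_⟩
  · have h1 : Tendsto (fun j : ℕ => 7 * (j : ℝ) * m / 16) atTop atTop := by
      have : Tendsto (fun j : ℕ => (j : ℝ)) atTop atTop := tendsto_natCast_atTop_atTop
      exact Tendsto.atTop_div_const (by norm_num)
        ((this.const_mul_atTop (by norm_num : (0:ℝ) < 7)).atTop_mul_const hm)
    exact tendsto_atTop_mono (fun j => by rw [hth j]; exact hval j) h1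
  · intro j
    rw [hth j, hder j]
    norm_num
end

section
/- Let b₀ > 0 and let F : ℝ → ℝ be a differentiable function with locally Lipschitz derivative satisfying F(S_j) ≥ 7S_j/16 and F'(S_j) = −1, where S₀ = 0, B₀ = b₀, S_j = S_{j−1} + 1/B_{j−1}, and B_j = B_{j−1} + 1/B_{j−1}. Then the WNGrad iterates θ₀ = 0, θ_k = θ_{k−1} − (1/b_{k−1})F'(θ_{k−1}), b_k = b_{k−1} + F'(θ_k)²/b_{k−1}, satisfy θ_j = S_j and b_j = B_j for all j, and F(θ_j) → ∞ while |F'(θ_j)| = 1. -/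
open Filter

/-- WNGrad on the piecewise construction with breakpoints `S_j` and slopes `−1`: the iterates
track `S_j` and the denominators track `B_j`, the optimality gap diverges, and the gradients
stay of magnitude `1`. -/
theorem wngrad_diverges (b₀ : ℝ) (hb : 0 < b₀)
    (S B : ℕ → ℝ) (hS0 : S 0 = 0) (hB0 : B 0 = b₀)
    (hSrec : ∀ j : ℕ, S (j+1) = S j + 1 / B j)
    (hBrec : ∀ j : ℕ, B (j+1) = B j + 1 / B j)
    (F : ℝ → ℝ) (hF : Differentiable ℝ F) (hloc : LocallyLipschitz (deriv F))
    (hval : ∀ j : ℕ, F (S j) ≥ 7 * S j / 16)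
    (hder : ∀ j : ℕ, deriv F (S j) = -1)
    (θ b : ℕ → ℝ) (hθ0 : θ 0 = 0) (hb0 : b 0 = b₀)
    (hθrec : ∀ k : ℕ, θ (k+1) = θ k - (1 / b k) * deriv F (θ k))
    (hbrec : ∀ k : ℕ, b (k+1) = b k + (deriv F (θ (k+1)))^2 / b k) :
    (∀ j : ℕ, θ j = S j ∧ b j = B j) ∧
    Tendsto (fun j => F (θ j)) atTop atTop ∧
    (∀ j : ℕ, |deriv F (θ j)| = 1) := by
  have hBpos : ∀ j, 0 < B j := by
    intro j
    induction j with
    | zero => rw [hB0]; exact hb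
    | succ k ih => rw [hBrec]; positivity
  have key : ∀ j : ℕ, θ j = S j ∧ b j = B j := by
    intro j
    induction j with
    | zero => exact ⟨by rw [hθ0, hS0], by rw [hb0, hB0]⟩
    | succ k ih =>
      obtain ⟨h1, h2⟩ := ih
      have hθ : θ (k+1) = S (k+1) := by
        rw [hθrec, h1, h2, hder k, hSrec]; ring
      refine ⟨hθ, ?_⟩
      rw [hbrec, hθ, h2, hder (k+1), hBrec]; ring
  have hSB : ∀ j, S j = B j - b₀ := by
    intro j
    induction j with
    | zero => rw [hS0, hB0]; ring
    | succ k ih => rw [hSrec, hBrec, ih]; ring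
  have hBsq : ∀ j : ℕ, 2 * j ≤ (B j)^2 := by
    intro j
    induction j with
    | zero => simp; positivity
    | succ k ih =>
      have hk := hBpos k
      have : (B (k+1))^2 = (B k)^2 + 2 + (1 / B k)^2 := by
        rw [hBrec]; field_simp; ring
      rw [this]
      push_cast
      nlinarith [sq_nonneg (1 / B k)]
  have hBge : ∀ j : ℕ, Real.sqrt (2 * j) ≤ B j := by
    intro j
    calc Real.sqrt (2 * j) ≤ Real.sqrt ((B j)^2) := Real.sqrt_le_sqrt (hBsq j)
    _ = B j := Real.sqrt_sq (hBpos j).le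
  have hBtop : Tendsto B atTop atTop := by
    apply tendsto_atTop_mono hBge
    rw [tendsto_atTop]
    intro M
    filter_upwards [eventually_ge_atTop ⌈M ^ 2 / 2⌉₊] with j hj
    rcases le_or_gt M 0 with hM | hM
    · exact hM.trans (Real.sqrt_nonneg _)
    · rw [Real.le_sqrt hM.le]
      have : (M ^ 2 / 2 : ℝ) ≤ j := (Nat.ceil_le.mp le_rfl).trans (by exact_mod_cast Nat.cast_le.mpr hj)
      linarith
      positivity
  refine ⟨key, ?_, ?_⟩
  · have hle : ∀ j : ℕ, 7 * (B j - b₀) / 16 ≤ F (θ j) := by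
      intro j
      rw [(key j).1, ← hSB j]
      exact hval j
    apply tendsto_atTop_mono hle
    apply Tendsto.atTop_div_const (by norm_num : (0:ℝ) < 16)
    apply Tendsto.const_mul_atTop (by norm_num : (0:ℝ) < 7)
    exact hBtop.atTop_add tendsto_const_nhds
  · intro j
    rw [(key j).1, hder j]
    norm_num
end
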